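/- Let m ≥ 1 and r ≥ 1 be integers and let a, b₁, …, b_m be integers. If 2r divides (a+2r)(a+r) − Σᵢ₌₁^m bᵢ(bᵢ+r) + r² + 1, then gcd(r, a, b₁, …, b_m) = 1. -/
import Mathlib


/-- Arithmetic core of Lemma 2.9(2): a potentially exceptional Chern character is
primitive, i.e. `gcd (r, a, b₁, …, b_m) = 1`. -/
theorem stmt_0 (m : ℕ) (hm : 1 ≤ m) (r a : ℤ) (hr : 1 ≤ r) (b : Fin m → ℤ)
    (hdvd : (2 * r) ∣ ((a + 2 * r) * (a + r) - ∑ i, b i * (b i + r) + r ^ 2 + 1)) :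
    gcd r (gcd a ((Finset.univ : Finset (Fin m)).gcd b)) = 1 := by
  set d := gcd r (gcd a ((Finset.univ : Finset (Fin m)).gcd b)) with hd
  have hdr : d ∣ r := gcd_dvd_left _ _
  have hda : d ∣ a := (gcd_dvd_right r _).trans (gcd_dvd_left a _)
  have hdb : ∀ i : Fin m, d ∣ b i := fun i =>
    ((gcd_dvd_right r _).trans (gcd_dvd_right a _)).trans
      (Finset.gcd_dvd (Finset.mem_univ i))
  have h1 : d ∣ ((a + 2 * r) * (a + r) - ∑ i, b i * (b i + r) + r ^ 2) := by
    apply dvd_add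
    · apply dvd_sub
      · exact Dvd.dvd.mul_right (dvd_add hda (Dvd.dvd.mul_left hdr 2)) _
      · exact Finset.dvd_sum fun i _ => Dvd.dvd.mul_right (hdb i) _
    · exact Dvd.dvd.mul_right hdr r |>.trans (by rw [sq])
  have h2 : d ∣ ((a + 2 * r) * (a + r) - ∑ i, b i * (b i + r) + r ^ 2 + 1) :=
    (hdr.mul_left 2).trans hdvd
  have h3 : d ∣ 1 := (dvd_add_right h1).mp h2
  have hdnn : 0 ≤ d := by rw [hd, ← Int.coe_gcd]; positivity
  exact Int.eq_one_of_dvd_one hdnn h3
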